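/- Under the stated tank setup, since φ(t) ∈ {0,1} and P_D(t) ≥ 0 (which follows from positive semidefiniteness of D_d(t)), for every t ≥ 0 the dissipation inequality ∫₀ᵗ ẋ(τ)ᵀ F_ext(τ) dτ ≥ H(t) − H(0) + T(t) − T(0) − ∫₀ᵗ (1 − γ(τ)) P_M(τ) dτ holds. -/

import Mathlib

/-!
Along a trajectory, `d/dt (H + T) = ẋᵀ F_ext − (1 − φ) P_D + (1 − γ) P_M`: differentiating `H`
produces `ẋᵀ M_d ẍ + P_M` (using the symmetry of `M_d`), and the tank dynamics are designed so that
`d/dt (½ z²) = z ż = φ P_D − γ P_M`. Since `φ ≤ 1` and `P_D ≥ 0`, the derivative of `H + T` is bounded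
by `ẋᵀ F_ext + (1 − γ) P_M`, and integrating this bound over `[0, t]` gives the inequality.
-/

open Matrix

section

variable {m n : Type*} [Fintype m] [Fintype n]

theorem HasDerivAt.dotProduct_mulVec {u : ℝ → m → ℝ} {M : ℝ → Matrix m n ℝ} {w : ℝ → n → ℝ}
    {u' : m → ℝ} {M' : Matrix m n ℝ} {w' : n → ℝ} {t : ℝ} (hu : HasDerivAt u u' t)
    (hM : ∀ i j, HasDerivAt (fun s => M s i j) (M' i j) t) (hw : HasDerivAt w w' t) :
    HasDerivAt (fun s => u s ⬝ᵥ (M s *ᵥ w s))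
      (u' ⬝ᵥ (M t *ᵥ w t) + u t ⬝ᵥ (M' *ᵥ w t) + u t ⬝ᵥ (M t *ᵥ w')) t := by
  have hu_apply := hasDerivAt_pi.mp hu
  have hw_apply := hasDerivAt_pi.mp hw
  refine (HasDerivAt.fun_sum fun i _ => (hu_apply i).mul
    (HasDerivAt.fun_sum fun j _ => (hM i j).mul (hw_apply j))).congr_deriv ?_
  simp only [dotProduct, mulVec, Pi.mul_apply, Finset.mul_sum, ← Finset.sum_add_distrib]
  exact Finset.sum_congr rfl fun i _ => Finset.sum_congr rfl fun j _ => by ring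

theorem Matrix.IsSymm.dotProduct_mulVec_comm {R : Type*} [CommSemiring R] {M : Matrix n n R}
    (hM : M.IsSymm) (u w : n → R) : u ⬝ᵥ (M *ᵥ w) = w ⬝ᵥ (M *ᵥ u) := by
  rw [dotProduct_mulVec, dotProduct_comm, ← vecMul_transpose, hM.eq]

theorem HasDerivAt.half_dotProduct_mulVec_self {v : ℝ → n → ℝ} {M : ℝ → Matrix n n ℝ}
    {v' : n → ℝ} {M' : Matrix n n ℝ} {t : ℝ} (hv : HasDerivAt v v' t)
    (hM : ∀ i j, HasDerivAt (fun s => M s i j) (M' i j) t) (hMt : (M t).IsSymm) :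
    HasDerivAt (fun s => 1 / 2 * (v s ⬝ᵥ (M s *ᵥ v s)))
      (v t ⬝ᵥ (M t *ᵥ v') + 1 / 2 * (v t ⬝ᵥ (M' *ᵥ v t))) t := by
  refine ((hv.dotProduct_mulVec hM hv).const_mul (1 / 2)).congr_deriv ?_
  rw [hMt.dotProduct_mulVec_comm v']
  ring

end

theorem continuous_of_hasDerivAt_apply {m n : Type*} {M M' : ℝ → Matrix m n ℝ}
    (hM : ∀ i j t, HasDerivAt (fun s => M s i j) (M' t i j) t) : Continuous M :=
  continuous_matrix fun i j => continuous_iff_continuousAt.2 fun t => (hM i j t).continuousAt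

theorem HasDerivAt.half_sq_of_div {z : ℝ → ℝ} {p t : ℝ} (hz : HasDerivAt z (p / z t) t)
    (hzt : z t ≠ 0) : HasDerivAt (fun s => 1 / 2 * z s ^ 2) p t := by
  refine ((hz.pow 2).const_mul (1 / 2)).congr_deriv ?_
  field_simp
  ring

theorem sub_le_integral_add_of_hasDerivAt_le {f f' g h : ℝ → ℝ} {a b : ℝ} (hab : a ≤ b)
    (hf : ∀ x, HasDerivAt f (f' x) x) (hf' : ∀ x, f' x ≤ g x + h x)
    (hg : IntervalIntegrable g MeasureTheory.volume a b)
    (hh : IntervalIntegrable h MeasureTheory.volume a b) :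
    f b - f a ≤ (∫ x in a..b, g x) + ∫ x in a..b, h x := by
  rw [← intervalIntegral.integral_add hg hh]
  exact intervalIntegral.sub_le_integral_of_hasDeriv_right_of_le hab
    (fun x _ => (hf x).continuousAt.continuousWithinAt) (fun x _ => (hf x).hasDerivWithinAt)
    ((intervalIntegrable_iff_integrableOn_Icc_of_le hab).1 (hg.add hh)) (fun x _ => hf' x)

theorem tank_dissipation_inequality_general {n : ℕ}
    (x : ℝ → Fin n → ℝ) (hx : ContDiff ℝ 2 x)
    (Md Dd Md' Dd' : ℝ → Matrix (Fin n) (Fin n) ℝ)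
    (hMd' : ∀ i j t, HasDerivAt (fun s => Md s i j) (Md' t i j) t)
    (hDd' : ∀ i j t, HasDerivAt (fun s => Dd s i j) (Dd' t i j) t)
    (hMdpd : ∀ t, (Md t).PosDef) (hDdpd : ∀ t, (Dd t).PosDef)
    (Fext : ℝ → Fin n → ℝ)
    (hFext : ∀ t, Fext t = Md t *ᵥ deriv (deriv x) t + Dd t *ᵥ deriv x t)
    (PD PM : ℝ → ℝ)
    (hPD : ∀ t, PD t = deriv x t ⬝ᵥ (Dd t *ᵥ deriv x t))
    (hPM : ∀ t, PM t = (1 / 2) * (deriv x t ⬝ᵥ (Md' t *ᵥ deriv x t)))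
    (φ γ : ℝ → ℝ)
    (hφ : ∀ t, φ t = 0 ∨ φ t = 1)
    (hγPMint : ∀ t, IntervalIntegrable (fun τ => (1 - γ τ) * PM τ) MeasureTheory.volume 0 t)
    (z : ℝ → ℝ) (hz : ∀ t, z t ≠ 0)
    (hzdyn : ∀ t, HasDerivAt z (φ t / z t * PD t - γ t / z t * PM t) t)
    (T H : ℝ → ℝ)
    (hT : ∀ t, T t = (1 / 2) * z t ^ 2)
    (hH : ∀ t, H t = (1 / 2) * (deriv x t ⬝ᵥ (Md t *ᵥ deriv x t))) :
    ∀ t ≥ (0 : ℝ),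
      (∫ τ in (0 : ℝ)..t, deriv x τ ⬝ᵥ Fext τ) ≥
        H t - H 0 + T t - T 0 - ∫ τ in (0 : ℝ)..t, (1 - γ τ) * PM τ := by
  intro t ht
  set v := deriv x
  set a := deriv v
  have hv : ContDiff ℝ 1 v := hx.deriv'
  have hva : ∀ s, HasDerivAt v (a s) s := fun s => (hv.differentiable one_ne_zero s).hasDerivAt
  have hH' : ∀ s, HasDerivAt H (v s ⬝ᵥ (Md s *ᵥ a s) + PM s) s := fun s => by
    rw [funext hH, hPM]
    exact (hva s).half_dotProduct_mulVec_self (fun i j => hMd' i j s)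
      (isHermitian_iff_isSymm.1 (hMdpd s).isHermitian)
  have hT' : ∀ s, HasDerivAt T (φ s * PD s - γ s * PM s) s := fun s => by
    rw [funext hT]
    exact ((hzdyn s).congr_deriv (by ring)).half_sq_of_div (hz s)
  have hpower : Continuous fun s => v s ⬝ᵥ Fext s := by
    simp only [hFext]
    exact hv.continuous.dotProduct
      (((continuous_of_hasDerivAt_apply hMd').matrix_mulVec (hv.continuous_deriv le_rfl)).add
        ((continuous_of_hasDerivAt_apply hDd').matrix_mulVec hv.continuous))
  have hbound : ∀ s, v s ⬝ᵥ (Md s *ᵥ a s) + PM s + (φ s * PD s - γ s * PM s) ≤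
      v s ⬝ᵥ Fext s + (1 - γ s) * PM s := fun s => by
    have hφ_le : φ s ≤ 1 := by rcases hφ s with h | h <;> simp [h]
    have hPD_nonneg : 0 ≤ PD s := by
      simpa [hPD] using (hDdpd s).posSemidef.dotProduct_mulVec_nonneg (v s)
    rw [hFext, dotProduct_add, ← hPD]
    nlinarith [mul_nonneg (sub_nonneg.2 hφ_le) hPD_nonneg]
  have hbalance := sub_le_integral_add_of_hasDerivAt_le ht
    (fun s => (hH' s).fun_add (hT' s)) hbound (hpower.intervalIntegrable 0 t) (hγPMint t)
  linarith

/-- Under the tank setup, since `φ(t) ∈ {0,1}` and `P_D(t) ≥ 0`, for every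
`t ≥ 0` the dissipation inequality
`∫₀ᵗ ẋᵀ F_ext dτ ≥ H(t) − H(0) + T(t) − T(0) − ∫₀ᵗ (1 − γ) P_M dτ` holds. -/
theorem tank_dissipation_inequality {n : ℕ} (hn : 0 < n)
    (x : ℝ → Fin n → ℝ) (hx : ContDiff ℝ 2 x)
    (Md Dd Md' Dd' : ℝ → Matrix (Fin n) (Fin n) ℝ)
    (hMd' : ∀ i j t, HasDerivAt (fun s => Md s i j) (Md' t i j) t)
    (hMd'cont : ∀ i j, Continuous fun t => Md' t i j)
    (hDd' : ∀ i j t, HasDerivAt (fun s => Dd s i j) (Dd' t i j) t)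
    (hDd'cont : ∀ i j, Continuous fun t => Dd' t i j)
    (hMdpd : ∀ t, (Md t).PosDef) (hDdpd : ∀ t, (Dd t).PosDef)
    (Fext : ℝ → Fin n → ℝ)
    (hFext : ∀ t, Fext t = Md t *ᵥ deriv (deriv x) t + Dd t *ᵥ deriv x t)
    (PD PM : ℝ → ℝ)
    (hPD : ∀ t, PD t = deriv x t ⬝ᵥ (Dd t *ᵥ deriv x t))
    (hPM : ∀ t, PM t = (1 / 2) * (deriv x t ⬝ᵥ (Md' t *ᵥ deriv x t)))
    (φ γ : ℝ → ℝ)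
    (hφ : ∀ t, φ t = 0 ∨ φ t = 1) (hγ : ∀ t, γ t = 0 ∨ γ t = 1)
    (hφPDint : ∀ t, IntervalIntegrable (fun τ => (1 - φ τ) * PD τ) MeasureTheory.volume 0 t)
    (hγPMint : ∀ t, IntervalIntegrable (fun τ => (1 - γ τ) * PM τ) MeasureTheory.volume 0 t)
    (z : ℝ → ℝ) (hz : ∀ t, z t ≠ 0)
    (hzdyn : ∀ t, HasDerivAt z (φ t / z t * PD t - γ t / z t * PM t) t)
    (T H : ℝ → ℝ)
    (hT : ∀ t, T t = (1 / 2) * z t ^ 2)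
    (hH : ∀ t, H t = (1 / 2) * (deriv x t ⬝ᵥ (Md t *ᵥ deriv x t))) :
    ∀ t ≥ (0 : ℝ),
      (∫ τ in (0 : ℝ)..t, deriv x τ ⬝ᵥ Fext τ) ≥
        H t - H 0 + T t - T 0 - ∫ τ in (0 : ℝ)..t, (1 - γ τ) * PM τ :=
  tank_dissipation_inequality_general x hx Md Dd Md' Dd' hMd' hDd' hMdpd hDdpd Fext hFext PD PM hPD
    hPM φ γ hφ hγPMint z hz hzdyn T H hT hH
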